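/- Let p be a prime, N ≥ 1, ξ = exp(2πi/p), and let S be a commutative subgroup of ℰ = { ξ^k E_{v,w} } containing the center 𝒵 = { ξ^k I }, with #S = p^{r+1}. Let χ : S → ℂˣ be a group homomorphism with χ(ξ·I) = ξ. Then the joint eigenspace Q_{S,χ} = { ψ ∈ ℂ^{p^N} : A ψ = χ(A) ψ for all A ∈ S } is a ℂ-linear subspace of dimension exactly p^{N−r}. -/

import Mathlib

open Matrix Complex

/-- `ξ = exp(2πi/p)`. -/
noncomputable def xi (p : ℕ) : ℂ := Complex.exp (2 * Real.pi * Complex.I / p)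

/-- The cyclic shift matrix `T`, with `T_{i,j} = 1` iff `j = i + 1` in `ℤ/pℤ`. -/
def Tmat (p : ℕ) : Matrix (ZMod p) (ZMod p) ℂ :=
  Matrix.of fun i j => if j = i + 1 then 1 else 0

/-- The diagonal matrix `R = diag(1, ξ, ξ², …, ξ^{p-1})`. -/
noncomputable def Rmat (p : ℕ) : Matrix (ZMod p) (ZMod p) ℂ :=
  Matrix.diagonal fun i => xi p ^ i.val

/-- `E_{v,w} = (T^{v_1} R^{w_1}) ⊗ ⋯ ⊗ (T^{v_N} R^{w_N})`, the iterated Kronecker product,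
realized as a matrix indexed by `(ℤ/pℤ)^N`. -/
noncomputable def Emat (p N : ℕ) [NeZero p] (v w : Fin N → ZMod p) :
    Matrix (Fin N → ZMod p) (Fin N → ZMod p) ℂ :=
  Matrix.of fun x y => ∏ i, (Tmat p ^ (v i).val * Rmat p ^ (w i).val) (x i) (y i)

/-- The pairing `⟨v,w⟩ = Σ_i v_i w_i ∈ ℤ/pℤ`. -/
def inn (p N : ℕ) (v w : Fin N → ZMod p) : ZMod p := ∑ i, v i * w i

/-- The set `ℰ = { ξ^k E_{v,w} }` of matrices. -/
noncomputable def ESet (p N : ℕ) [NeZero p] :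
    Set (Matrix (Fin N → ZMod p) (Fin N → ZMod p) ℂ) :=
  {A | ∃ (k : ZMod p) (v w : Fin N → ZMod p), A = xi p ^ k.val • Emat p N v w}

/-- The set `𝒵 = { ξ^k · I }` of scalar matrices. -/
noncomputable def ZSet (p N : ℕ) :
    Set (Matrix (Fin N → ZMod p) (Fin N → ZMod p) ℂ) :=
  {A | ∃ k : ZMod p,
    A = xi p ^ k.val • (1 : Matrix (Fin N → ZMod p) (Fin N → ZMod p) ℂ)}


/-!
The joint eigenspace is the range of the averaging projector `P = |S|⁻¹ ∑_{A ∈ S} χ(A)⁻¹ A`.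
Since `B P = χ(B) P` for `B ∈ S`, `P` is idempotent, so its rank is its trace. Orthogonality of
`p`-th roots of unity makes every `T^a R^b ≠ 1`, hence every `E_{v,w} ≠ 1`, traceless; only the
`p` scalars `ξ^k I ∈ S` contribute, each with `χ(ξ^k I)⁻¹ tr(ξ^k I) = p^N`. So
`rank P = p · p^N / p^{r+1} = p^{N-r}`.
-/

namespace Matrix

variable {ι m R : Type*} [Fintype ι] [CommRing R]

theorem trace_of_prod [DecidableEq ι] [Fintype m] (M : ι → Matrix m m R) :
    (of fun x y : ι → m => ∏ i, M i (x i) (y i)).trace = ∏ i, (M i).trace := by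
  simp only [trace, diag, of_apply, Finset.prod_univ_sum, Fintype.piFinset_univ]

theorem of_prod_one [DecidableEq m] :
    (of fun x y : ι → m => ∏ i, (1 : Matrix m m R) (x i) (y i)) = 1 := by
  ext x y
  simp only [of_apply, one_apply, Fintype.prod_boole, funext_iff]

end Matrix

section Averaging

open Finset Matrix

variable {n K : Type*} [Fintype n] [DecidableEq n] [Field K]

structure IsCharacterOn (S : Finset (Matrix n n K)) (χ : Matrix n n K → K) : Prop where
  mul_mem : ∀ A ∈ S, ∀ B ∈ S, A * B ∈ S
  exists_inv : ∀ A ∈ S, ∃ B ∈ S, A * B = 1 ∧ B * A = 1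
  map_mul : ∀ A ∈ S, ∀ B ∈ S, χ (A * B) = χ A * χ B
  ne_zero : ∀ A ∈ S, χ A ≠ 0

def averagingProjector (S : Finset (Matrix n n K)) (χ : Matrix n n K → K) : Matrix n n K :=
  (#S : K)⁻¹ • ∑ A ∈ S, (χ A)⁻¹ • A

namespace IsCharacterOn

variable {S : Finset (Matrix n n K)} {χ : Matrix n n K → K}

theorem mul_sum_inv_smul (hχ : IsCharacterOn S χ) {B : Matrix n n K} (hB : B ∈ S) :
    B * ∑ A ∈ S, (χ A)⁻¹ • A = χ B • ∑ A ∈ S, (χ A)⁻¹ • A := by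
  obtain ⟨B', hB', hBB', hB'B⟩ := hχ.exists_inv B hB
  rw [mul_sum, smul_sum]
  refine sum_nbij' (B * ·) (B' * ·) (fun A hA => hχ.mul_mem B hB A hA)
    (fun C hC => hχ.mul_mem B' hB' C hC) (fun A _ => by simp [← mul_assoc, hB'B])
    (fun C _ => by simp [← mul_assoc, hBB']) fun A hA => ?_
  rw [mul_smul_comm, smul_smul, hχ.map_mul B hB A hA, mul_inv, ← mul_assoc,
    mul_inv_cancel₀ (hχ.ne_zero B hB), one_mul]

theorem mul_averagingProjector (hχ : IsCharacterOn S χ) {B : Matrix n n K} (hB : B ∈ S) :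
    B * averagingProjector S χ = χ B • averagingProjector S χ := by
  rw [averagingProjector, Matrix.mul_smul, hχ.mul_sum_inv_smul hB, smul_comm]

theorem isIdempotentElem_averagingProjector (hχ : IsCharacterOn S χ) (hS : (#S : K) ≠ 0) :
    IsIdempotentElem (averagingProjector S χ) := by
  have hterm : ∀ B ∈ S, ((χ B)⁻¹ • B) * averagingProjector S χ = averagingProjector S χ := by
    intro B hB
    rw [smul_mul, hχ.mul_averagingProjector hB, smul_smul, inv_mul_cancel₀ (hχ.ne_zero B hB),
      one_smul]
  rw [IsIdempotentElem]
  conv_lhs => arg 1; rw [averagingProjector]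
  rw [smul_mul, sum_mul, sum_congr rfl hterm, sum_const, ← Nat.cast_smul_eq_nsmul K,
    smul_smul, inv_mul_cancel₀ hS, one_smul]

theorem averagingProjector_mulVec (hχ : IsCharacterOn S χ) (hS : (#S : K) ≠ 0)
    {f : n → K} (hf : ∀ A ∈ S, A *ᵥ f = χ A • f) : averagingProjector S χ *ᵥ f = f := by
  have hterm : ∀ A ∈ S, ((χ A)⁻¹ • A) *ᵥ f = f := fun A hA => by
    rw [smul_mulVec, hf A hA, smul_smul, inv_mul_cancel₀ (hχ.ne_zero A hA), one_smul]
  rw [averagingProjector, smul_mulVec, sum_mulVec, sum_congr rfl hterm, sum_const,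
    ← Nat.cast_smul_eq_nsmul K, smul_smul, inv_mul_cancel₀ hS, one_smul]

theorem coe_range_toLin'_averagingProjector (hχ : IsCharacterOn S χ) (hS : (#S : K) ≠ 0) :
    (LinearMap.range (toLin' (averagingProjector S χ)) : Set (n → K)) =
      {f | ∀ A ∈ S, A *ᵥ f = χ A • f} := by
  ext f
  simp only [SetLike.mem_coe, LinearMap.mem_range, toLin'_apply, Set.mem_ofPred_eq]
  constructor
  · rintro ⟨g, rfl⟩ A hA
    rw [mulVec_mulVec, hχ.mul_averagingProjector hA, smul_mulVec]
  · exact fun hf => ⟨f, hχ.averagingProjector_mulVec hS hf⟩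

end IsCharacterOn

theorem Matrix.finrank_range_toLin'_of_isIdempotentElem {P : Matrix n n K}
    (hP : IsIdempotentElem P) : (Module.finrank K (LinearMap.range (toLin' P)) : K) = P.trace := by
  have hP' : IsIdempotentElem (toLin' P) := by
    rw [IsIdempotentElem, Module.End.mul_eq_comp, ← toLin'_mul, hP]
  rw [← (LinearMap.IsIdempotentElem.isProj_range _ hP').trace, trace_toLin'_eq]

end Averaging

section Weyl

open Finset Matrix

theorem xi_ne_zero (p : ℕ) : xi p ≠ 0 := Complex.exp_ne_zero _

variable (p N : ℕ) [NeZero p]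

theorem xi_isPrimitiveRoot : IsPrimitiveRoot (xi p) p :=
  Complex.isPrimitiveRoot_exp p (NeZero.ne p)

theorem xi_pow_val_natCast (k : ℕ) : xi p ^ (k : ZMod p).val = xi p ^ k := by
  conv_rhs => rw [← Nat.mod_add_div k p, pow_add, pow_mul, (xi_isPrimitiveRoot p).pow_eq_one,
    one_pow, mul_one]
  rw [ZMod.val_natCast]

theorem Tmat_pow_apply (a : ℕ) (i j : ZMod p) :
    (Tmat p ^ a) i j = if j = i + a then 1 else 0 := by
  induction a generalizing j with
  | zero => simp [one_apply, eq_comm]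
  | succ a ih =>
    rw [pow_succ, mul_apply]
    simp only [ih]
    simp only [Tmat, of_apply, ite_mul, one_mul, zero_mul, sum_ite_eq', mem_univ, if_true,
      Nat.cast_succ, add_assoc]

theorem sum_xi_pow_val_pow_val (b : ZMod p) :
    ∑ x : ZMod p, (xi p ^ b.val) ^ x.val = if b = 0 then (p : ℂ) else 0 := by
  have hrange : ∑ x : ZMod p, (xi p ^ b.val) ^ x.val = ∑ j ∈ range p, (xi p ^ b.val) ^ j := by
    -- `ZMod (n + 1)` is `Fin (n + 1)` by definition
    obtain ⟨n, rfl⟩ : ∃ n, p = n + 1 := Nat.exists_eq_succ_of_ne_zero (NeZero.ne p)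
    exact Fin.sum_univ_eq_sum_range _ _
  rw [hrange]
  split_ifs with hb
  · simp [hb]
  · have hne : xi p ^ b.val ≠ 1 := fun h =>
      hb ((ZMod.val_eq_zero b).mp (Nat.eq_zero_of_dvd_of_lt
        (((xi_isPrimitiveRoot p).pow_eq_one_iff_dvd _).mp h) (ZMod.val_lt b)))
    have hpow : (xi p ^ b.val) ^ p = 1 := by
      rw [← pow_mul, mul_comm, pow_mul, (xi_isPrimitiveRoot p).pow_eq_one, one_pow]
    have := mul_geom_sum (xi p ^ b.val) p
    rw [hpow, sub_self] at this
    exact (mul_eq_zero.mp this).resolve_left (sub_ne_zero.mpr hne)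

theorem trace_Tmat_pow_mul_Rmat_pow (a b : ZMod p) :
    (Tmat p ^ a.val * Rmat p ^ b.val).trace = if a = 0 ∧ b = 0 then (p : ℂ) else 0 := by
  have hR : Rmat p ^ b.val = diagonal fun i : ZMod p => (xi p ^ b.val) ^ i.val := by
    simp only [Rmat, diagonal_pow, Pi.pow_def, ← pow_mul, mul_comm]
  by_cases ha : a = 0
  · simp [ha, hR, trace_diagonal, sum_xi_pow_val_pow_val]
  · simp [hR, trace, mul_diagonal, Tmat_pow_apply, ha]

theorem Emat_zero_zero : Emat p N 0 0 = 1 := by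
  simpa [Emat] using of_prod_one (ι := Fin N) (m := ZMod p) (R := ℂ)

theorem trace_Emat (v w : Fin N → ZMod p) :
    (Emat p N v w).trace = if v = 0 ∧ w = 0 then (p : ℂ) ^ N else 0 := by
  rw [Emat, trace_of_prod]
  simp only [trace_Tmat_pow_mul_Rmat_pow, Fintype.prod_ite_zero, prod_const, card_univ,
    Fintype.card_fin, funext_iff, Pi.zero_apply, forall_and]

theorem trace_eq_zero_of_mem_ESet_of_notMem_ZSet
    {A : Matrix (Fin N → ZMod p) (Fin N → ZMod p) ℂ} (hE : A ∈ ESet p N) (hZ : A ∉ ZSet p N) :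
    A.trace = 0 := by
  obtain ⟨k, v, w, rfl⟩ := hE
  by_cases hvw : v = 0 ∧ w = 0
  · rw [hvw.1, hvw.2, Emat_zero_zero] at hZ
    exact absurd ⟨k, rfl⟩ hZ
  · rw [trace_smul, trace_Emat, if_neg hvw, smul_zero]

end Weyl

section Stabilizer

open Finset Matrix

variable {p N : ℕ} [NeZero p]

theorem xi_pow_smul_one_mem_ZSet (k : ℕ) :
    xi p ^ k • (1 : Matrix (Fin N → ZMod p) (Fin N → ZMod p) ℂ) ∈ ZSet p N :=
  ⟨k, by rw [xi_pow_val_natCast]⟩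

theorem injective_xi_pow_val_smul_one :
    Function.Injective fun k : ZMod p =>
      xi p ^ k.val • (1 : Matrix (Fin N → ZMod p) (Fin N → ZMod p) ℂ) := by
  intro k l hkl
  have h := congr_fun (congr_fun hkl 0) 0
  simp only [Matrix.smul_apply, one_apply_eq, smul_eq_mul, mul_one] at h
  exact ZMod.val_injective p ((xi_isPrimitiveRoot p).pow_inj (ZMod.val_lt k) (ZMod.val_lt l) h)

theorem map_xi_pow_smul_one {S : Set (Matrix (Fin N → ZMod p) (Fin N → ZMod p) ℂ)}
    {χ : Matrix (Fin N → ZMod p) (Fin N → ZMod p) ℂ → ℂ} (hZS : ZSet p N ⊆ S)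
    (hχ : ∀ A ∈ S, ∀ B ∈ S, χ (A * B) = χ A * χ B) (hχ1 : χ 1 = 1)
    (hχξ : χ (xi p • (1 : Matrix (Fin N → ZMod p) (Fin N → ZMod p) ℂ)) = xi p) (k : ℕ) :
    χ (xi p ^ k • (1 : Matrix (Fin N → ZMod p) (Fin N → ZMod p) ℂ)) = xi p ^ k := by
  induction k with
  | zero => simpa using hχ1
  | succ k ih =>
    have hξ : xi p • (1 : Matrix (Fin N → ZMod p) (Fin N → ZMod p) ℂ) ∈ S :=
      hZS (by simpa using xi_pow_smul_one_mem_ZSet (N := N) 1)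
    rw [pow_succ', ← smul_smul, ← smul_one_mul (xi p),
      hχ _ hξ _ (hZS (xi_pow_smul_one_mem_ZSet k)), hχξ, ih]

theorem trace_averagingProjector {S : Finset (Matrix (Fin N → ZMod p) (Fin N → ZMod p) ℂ)}
    {χ : Matrix (Fin N → ZMod p) (Fin N → ZMod p) ℂ → ℂ} (hSE : ↑S ⊆ ESet p N)
    (hZS : ZSet p N ⊆ ↑S)
    (hχZ : ∀ k : ℕ, χ (xi p ^ k • (1 : Matrix (Fin N → ZMod p) (Fin N → ZMod p) ℂ)) = xi p ^ k) :
    (averagingProjector S χ).trace = (#S : ℂ)⁻¹ * p ^ (N + 1) := by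
  classical
  let center := univ.image fun k : ZMod p => xi p ^ k.val •
    (1 : Matrix (Fin N → ZMod p) (Fin N → ZMod p) ℂ)
  have hcenter : center ⊆ S := by
    rintro _ hA
    obtain ⟨k, -, rfl⟩ := mem_image.mp hA
    exact hZS ⟨k, rfl⟩
  have hoff : ∀ A ∈ S, A ∉ center → (χ A)⁻¹ * A.trace = 0 := by
    intro A hA hAc
    rw [trace_eq_zero_of_mem_ESet_of_notMem_ZSet p N (hSE hA)
      (fun ⟨k, hk⟩ => hAc (mem_image.mpr ⟨k, mem_univ _, hk.symm⟩)), mul_zero]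
  have hterm : ∀ k : ZMod p, (χ (xi p ^ k.val • 1))⁻¹ *
      (xi p ^ k.val • (1 : Matrix (Fin N → ZMod p) (Fin N → ZMod p) ℂ)).trace = (p : ℂ) ^ N := by
    intro k
    rw [hχZ, trace_smul, trace_one, smul_eq_mul,
      inv_mul_cancel_left₀ (pow_ne_zero _ (xi_ne_zero p))]
    simp
  rw [averagingProjector, trace_smul, trace_sum, smul_eq_mul]
  simp only [trace_smul, smul_eq_mul]
  rw [← sum_subset hcenter hoff, sum_image fun k _ l _ h => injective_xi_pow_val_smul_one h]
  simp only [hterm, sum_const, card_univ, ZMod.card, nsmul_eq_mul, pow_succ']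

end Stabilizer

theorem Nat.eq_pow_sub_of_mul_pow_eq {p d m n : ℕ} (hp : 1 < p) (h : d * p ^ m = p ^ n) :
    d = p ^ (n - m) := by
  have hmn : m ≤ n := (Nat.pow_dvd_pow_iff_le_right hp).mp (Dvd.intro_left d h)
  rw [← Nat.pow_div hmn (by omega), ← h, Nat.mul_div_cancel _ (by positivity)]

theorem stmt13_general (p N r : ℕ) (hp : p.Prime) [NeZero p]
    (S : Set (Matrix (Fin N → ZMod p) (Fin N → ZMod p) ℂ))
    (hsub : S ⊆ ESet p N)
    (hone : (1 : Matrix (Fin N → ZMod p) (Fin N → ZMod p) ℂ) ∈ S)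
    (hmul : ∀ A ∈ S, ∀ B ∈ S, A * B ∈ S)
    (hinv : ∀ A ∈ S, ∃ B ∈ S, A * B = 1 ∧ B * A = 1)
    (hZS : ZSet p N ⊆ S)
    (hcard : S.ncard = p ^ (r + 1))
    (χ : Matrix (Fin N → ZMod p) (Fin N → ZMod p) ℂ → ℂ)
    (hχ : ∀ A ∈ S, ∀ B ∈ S, χ (A * B) = χ A * χ B)
    (hχξ : χ (xi p • (1 : Matrix (Fin N → ZMod p) (Fin N → ZMod p) ℂ)) = xi p) :
    ∃ Q : Submodule ℂ ((Fin N → ZMod p) → ℂ),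
      (Q : Set ((Fin N → ZMod p) → ℂ)) =
        {f | ∀ A ∈ S, A.mulVec f = χ A • f} ∧
      Module.finrank ℂ Q = p ^ (N - r) := by
  have hfin : S.Finite := Set.finite_of_ncard_pos (by rw [hcard]; exact pow_pos hp.pos _)
  obtain ⟨S, rfl⟩ := hfin.exists_finset_coe
  rw [Set.ncard_coe_finset] at hcard
  have hξS : xi p • (1 : Matrix (Fin N → ZMod p) (Fin N → ZMod p) ℂ) ∈ S :=
    hZS (by simpa using xi_pow_smul_one_mem_ZSet (N := N) 1)
  have hχ1 : χ 1 = 1 :=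
    mul_left_cancel₀ (xi_ne_zero p) (by rw [← hχξ, ← hχ _ hξS _ hone, mul_one, mul_one])
  have hχS : IsCharacterOn S χ := ⟨hmul, hinv, hχ, fun A hA h0 => by
    obtain ⟨B, hB, hAB, -⟩ := hinv A hA
    simpa [hAB, hχ1, h0] using hχ A hA B hB⟩
  have hS : (S.card : ℂ) = (p : ℂ) ^ (r + 1) := by exact_mod_cast hcard
  have hS0 : (S.card : ℂ) ≠ 0 := by rw [hS]; exact pow_ne_zero _ (NeZero.ne _)
  refine ⟨LinearMap.range (toLin' (averagingProjector S χ)),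
    hχS.coe_range_toLin'_averagingProjector hS0, ?_⟩
  have hdim :=
    finrank_range_toLin'_of_isIdempotentElem (hχS.isIdempotentElem_averagingProjector hS0)
  rw [trace_averagingProjector hsub hZS (map_xi_pow_smul_one hZS hχ hχ1 hχξ), hS,
    eq_inv_mul_iff_mul_eq₀ (pow_ne_zero _ (NeZero.ne _)), mul_comm] at hdim
  have hdimℕ : Module.finrank ℂ (LinearMap.range (toLin' (averagingProjector S χ))) * p ^ (r + 1) =
      p ^ (N + 1) := by exact_mod_cast hdim
  rw [Nat.eq_pow_sub_of_mul_pow_eq hp.one_lt hdimℕ, Nat.add_sub_add_right]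

theorem stmt13 (p N r : ℕ) (hp : p.Prime) [NeZero p] (hN : 1 ≤ N)
    (S : Set (Matrix (Fin N → ZMod p) (Fin N → ZMod p) ℂ))
    (hsub : S ⊆ ESet p N)
    (hone : (1 : Matrix (Fin N → ZMod p) (Fin N → ZMod p) ℂ) ∈ S)
    (hmul : ∀ A ∈ S, ∀ B ∈ S, A * B ∈ S)
    (hinv : ∀ A ∈ S, ∃ B ∈ S, A * B = 1 ∧ B * A = 1)
    (hcomm : ∀ A ∈ S, ∀ B ∈ S, A * B = B * A)
    (hZS : ZSet p N ⊆ S)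
    (hcard : S.ncard = p ^ (r + 1))
    (χ : Matrix (Fin N → ZMod p) (Fin N → ZMod p) ℂ → ℂ)
    (hχ : ∀ A ∈ S, ∀ B ∈ S, χ (A * B) = χ A * χ B)
    (hχξ : χ (xi p • (1 : Matrix (Fin N → ZMod p) (Fin N → ZMod p) ℂ)) = xi p) :
    ∃ Q : Submodule ℂ ((Fin N → ZMod p) → ℂ),
      (Q : Set ((Fin N → ZMod p) → ℂ)) =
        {f | ∀ A ∈ S, A.mulVec f = χ A • f} ∧
      Module.finrank ℂ Q = p ^ (N - r) :=
  stmt13_general p N r hp S hsub hone hmul hinv hZS hcard χ hχ hχξ
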